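/- Let Δ be a quasi-fan in N with minimal cone V (the intersection of all its cones), L = V ∩ N, and Q : N → N/L the projection. Then the images Q_ℝ(σ) of the cones σ ∈ Δ are strictly convex cones in (N/L)_ℝ, and they form a quasi-fan (hence a fan) in N/L. -/
import Mathlib


/-- The convex cone generated by a finite set of vectors. -/
def coneHull {V : Type*} [AddCommGroup V] [Module ℝ V] (S : Finset V) : Set V :=
  {x | ∃ c : V → ℝ, (∀ v, 0 ≤ c v) ∧ x = ∑ v ∈ S, c v • v}

/-- A convex polyhedral cone: generated by finitely many vectors. -/
def IsPolyCone {V : Type*} [AddCommGroup V] [Module ℝ V] (σ : Set V) : Prop :=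
  ∃ S : Finset V, σ = coneHull S

/-- `F` is a face of the cone `σ`, cut out by a supporting linear form. -/
def IsFace {V : Type*} [AddCommGroup V] [Module ℝ V] (F σ : Set V) : Prop :=
  F ⊆ σ ∧ ∃ u : Module.Dual ℝ V, (∀ x ∈ σ, 0 ≤ u x) ∧ F = {x ∈ σ | u x = 0}

/-- A quasi-fan: a finite nonempty set of convex polyhedral cones, closed
under taking faces, any two of whose members intersect in a common face. -/
def IsQuasiFan {V : Type*} [AddCommGroup V] [Module ℝ V] (Δ : Set (Set V)) : Prop :=
  Δ.Finite ∧ Δ.Nonempty ∧ (∀ σ ∈ Δ, IsPolyCone σ) ∧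
    (∀ σ ∈ Δ, ∀ F, IsFace F σ → F ∈ Δ) ∧
    (∀ σ ∈ Δ, ∀ τ ∈ Δ, IsFace (σ ∩ τ) σ)

lemma coneHull_add {V : Type*} [AddCommGroup V] [Module ℝ V] {S : Finset V} {x y : V}
    (hx : x ∈ coneHull S) (hy : y ∈ coneHull S) : x + y ∈ coneHull S := by
  obtain ⟨c, hc, rfl⟩ := hx
  obtain ⟨d, hd, rfl⟩ := hy
  exact ⟨c + d, fun v => add_nonneg (hc v) (hd v), by
    simp [add_smul, Finset.sum_add_distrib]⟩

lemma image_coneHull {V W : Type*} [AddCommGroup V] [Module ℝ V] [AddCommGroup W] [Module ℝ W]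
    [DecidableEq W] (f : V →ₗ[ℝ] W) (S : Finset V) :
    ⇑f '' coneHull S = coneHull (S.image f) := by
  ext y
  constructor
  · rintro ⟨x, ⟨c, hc, rfl⟩, rfl⟩
    refine ⟨fun w => ∑ v ∈ S.filter (fun v => f v = w), c v,
      fun w => Finset.sum_nonneg fun v _ => hc v, ?_⟩
    have key : ∑ w ∈ S.image f, (∑ v ∈ S.filter (fun v => f v = w), c v) • w
        = ∑ v ∈ S, c v • f v := by
      rw [← Finset.sum_fiberwise_of_maps_to (fun v hv => Finset.mem_image_of_mem f hv)
        (fun v => c v • f v)]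
      refine Finset.sum_congr rfl fun w _ => ?_
      rw [Finset.sum_smul]
      exact Finset.sum_congr rfl fun v hv => by rw [(Finset.mem_filter.mp hv).2]
    rw [map_sum]
    simp_rw [map_smul]
    exact key.symm
  · rintro ⟨d, hd, rfl⟩
    set c : V → ℝ := fun v => d (f v) / ((S.filter (fun v' => f v' = f v)).card : ℝ) with hcdef
    refine ⟨∑ v ∈ S, c v • v,
      ⟨c, fun v => div_nonneg (hd _) (Nat.cast_nonneg _), rfl⟩, ?_⟩
    rw [map_sum]
    simp_rw [map_smul]
    rw [← Finset.sum_fiberwise_of_maps_to (fun v hv => Finset.mem_image_of_mem f hv)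
      (fun v => c v • f v)]
    refine Finset.sum_congr rfl fun w hw => ?_
    obtain ⟨v₀, hv₀S, hv₀⟩ := Finset.mem_image.mp hw
    have hcard : ((S.filter (fun v' => f v' = w)).card : ℝ) ≠ 0 := by
      simp only [ne_eq, Nat.cast_eq_zero, Finset.card_eq_zero]
      intro h
      have hmem : v₀ ∈ S.filter (fun v' => f v' = w) := Finset.mem_filter.mpr ⟨hv₀S, hv₀⟩
      rw [h] at hmem
      exact absurd hmem (Finset.notMem_empty v₀)
    have hconst : ∀ v ∈ S.filter (fun v => f v = w),
        c v • f v = (d w / ((S.filter (fun v' => f v' = w)).card : ℝ)) • w := by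
      intro v hv
      obtain ⟨hvS, hfv⟩ := Finset.mem_filter.mp hv
      rw [hcdef]
      simp only
      rw [hfv]
    rw [Finset.sum_congr rfl hconst, Finset.sum_const, ← Nat.cast_smul_eq_nsmul ℝ, smul_smul]
    congr 1
    field_simp

/-- Let `Δ` be a quasi-fan whose minimal cone (the intersection of all of its
cones) is the linear subspace `L`, and let `Q : V → V/L` be the projection.
Then the images `Q(σ)`, `σ ∈ Δ`, are strictly convex cones and they form a
quasi-fan (hence a fan) in `V/L`. -/
theorem quotient_fan {V : Type*} [AddCommGroup V] [Module ℝ V]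
    (Δ : Set (Set V)) (hΔ : IsQuasiFan Δ)
    (L : Submodule ℝ V) (hL : (L : Set V) = ⋂ σ ∈ Δ, σ) :
    (∀ σ ∈ Δ, (L.mkQ '' σ) ∩ (-(L.mkQ '' σ)) = {0}) ∧
    IsQuasiFan {τ : Set (V ⧸ L) | ∃ σ ∈ Δ, τ = L.mkQ '' σ} := by
  classical
  obtain ⟨hfin, hne, hpoly, hface, hcommon⟩ := hΔ
  -- L is contained in every cone of Δ
  have hLsub : ∀ σ ∈ Δ, (L : Set V) ⊆ σ := by
    intro σ hσ
    rw [hL]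
    exact Set.biInter_subset_of_mem hσ
  -- cones are closed under addition
  have hadd : ∀ σ ∈ Δ, ∀ x ∈ σ, ∀ y ∈ σ, x + y ∈ σ := by
    intro σ hσ
    obtain ⟨S, rfl⟩ := hpoly σ hσ
    exact fun x hx y hy => coneHull_add hx hy
  -- the lineality space of each cone is contained in L
  have hlin : ∀ σ ∈ Δ, ∀ x ∈ σ, -x ∈ σ → x ∈ L := by
    intro σ hσ x hx hx'
    rw [← SetLike.mem_coe, hL, Set.mem_iInter₂]
    intro τ hτ
    obtain ⟨hsub, u, hu, hF⟩ := hcommon σ hσ τ hτ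
    have hux : u x = 0 := by
      have h1 : 0 ≤ u x := hu x hx
      have h2 : 0 ≤ u (-x) := hu (-x) hx'
      rw [map_neg] at h2
      linarith
    have : x ∈ σ ∩ τ := by rw [hF]; exact ⟨hx, hux⟩
    exact this.2
  -- membership in kernel
  have hker : ∀ x : V, L.mkQ x = 0 → x ∈ L := by
    intro x hx
    rwa [← L.ker_mkQ, LinearMap.mem_ker]
  constructor
  · -- strict convexity of the images
    intro σ hσ
    ext y
    simp only [Set.mem_inter_iff, Set.mem_neg, Set.mem_singleton_iff]
    constructor
    · rintro ⟨⟨x, hx, rfl⟩, hy'⟩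
      obtain ⟨x', hx', hxx'⟩ := hy'
      have hQ : L.mkQ (x + x') = 0 := by
        rw [map_add, hxx']
        abel
      have hxl : x + x' ∈ L := hker _ hQ
      have hnx : -x ∈ σ := by
        have h1 : -(x + x') ∈ σ := hLsub σ hσ (neg_mem hxl)
        have := hadd σ hσ x' hx' _ h1
        rwa [show x' + -(x + x') = -x by abel] at this
      have : x ∈ L := hlin σ hσ x hx hnx
      rw [Submodule.mkQ_apply]
      exact (Submodule.Quotient.mk_eq_zero L).mpr this
    · rintro rfl
      have h0 : (0 : V) ∈ σ := hLsub σ hσ L.zero_mem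
      refine ⟨⟨0, h0, map_zero _⟩, 0, h0, ?_⟩
      rw [map_zero, neg_zero]
  · -- the images form a quasi-fan
    refine ⟨?_, ?_, ?_, ?_, ?_⟩
    · -- finiteness
      have : {τ : Set (V ⧸ L) | ∃ σ ∈ Δ, τ = L.mkQ '' σ}
          = (fun σ => L.mkQ '' σ) '' Δ := by
        ext τ
        simp only [Set.mem_setOf_eq, Set.mem_image]
        exact ⟨fun ⟨σ, h1, h2⟩ => ⟨σ, h1, h2.symm⟩, fun ⟨σ, h1, h2⟩ => ⟨σ, h1, h2.symm⟩⟩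
      rw [this]
      exact hfin.image _
    · -- nonemptiness
      obtain ⟨σ, hσ⟩ := hne
      exact ⟨L.mkQ '' σ, σ, hσ, rfl⟩
    · -- polyhedrality
      rintro τ ⟨σ, hσ, rfl⟩
      obtain ⟨S, rfl⟩ := hpoly σ hσ
      exact ⟨S.image L.mkQ, image_coneHull L.mkQ S⟩
    · -- face closure
      rintro τ ⟨σ, hσ, rfl⟩ F ⟨hFsub, u, hu, hF⟩
      set u' : Module.Dual ℝ V := u.comp L.mkQ with hu'def
      have hface' : IsFace {x ∈ σ | u' x = 0} σ := by
        refine ⟨fun x hx => hx.1, u', fun x hx => hu _ ⟨x, hx, rfl⟩, rfl⟩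
      refine ⟨{x ∈ σ | u' x = 0}, hface σ hσ _ hface', ?_⟩
      rw [hF]
      ext y
      constructor
      · rintro ⟨⟨x, hx, rfl⟩, huy⟩
        exact ⟨x, ⟨hx, huy⟩, rfl⟩
      · rintro ⟨x, ⟨hx, hux⟩, rfl⟩
        exact ⟨⟨x, hx, rfl⟩, hux⟩
    · -- pairwise intersections are faces
      rintro τ₁ ⟨σ, hσ, rfl⟩ τ₂ ⟨τ, hτ, rfl⟩
      obtain ⟨hsub, u, hu, hF⟩ := hcommon σ hσ τ hτ
      have huL : L ≤ LinearMap.ker u := by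
        intro l hl
        have : l ∈ σ ∩ τ := ⟨hLsub σ hσ hl, hLsub τ hτ hl⟩
        rw [hF] at this
        exact this.2
      set ub : Module.Dual ℝ (V ⧸ L) := L.liftQ u huL with hubdef
      have hub : ∀ x : V, ub (L.mkQ x) = u x := fun x => rfl
      constructor
      · exact Set.inter_subset_left
      refine ⟨ub, ?_, ?_⟩
      · rintro y ⟨x, hx, rfl⟩
        rw [hub]
        exact hu x hx
      · ext y
        constructor
        · rintro ⟨⟨x, hx, rfl⟩, x', hx', hxx'⟩
          have hQ : L.mkQ (x - x') = 0 := by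
            rw [map_sub, hxx', sub_self]
          have hxl : x - x' ∈ L := hker _ hQ
          have hxτ : x ∈ τ := by
            have h1 : x - x' ∈ τ := hLsub τ hτ hxl
            have := hadd τ hτ x' hx' _ h1
            rwa [show x' + (x - x') = x by abel] at this
          have : x ∈ σ ∩ τ := ⟨hx, hxτ⟩
          rw [hF] at this
          exact ⟨⟨x, hx, rfl⟩, by rw [hub]; exact this.2⟩
        · rintro ⟨⟨x, hx, rfl⟩, huy⟩
          rw [hub] at huy
          have : x ∈ σ ∩ τ := by rw [hF]; exact ⟨hx, huy⟩
          exact ⟨⟨x, hx, rfl⟩, x, this.2, rfl⟩
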